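/- arXiv:1510.01049 — 4 statements merged into one kernel-verified Lean document; each statement's English description precedes it below -/
import Mathlib

section
/- Let G be a group, H a subgroup of G, and n ∈ ℕ. Suppose ((a_{l,i})_{l∈ℕ,0≤i<n}, (b_l)_{l∈ℕ}) is an H-witness sequence of width n in G. Then: (1) for all l ≠ k in ℕ and all i < n, a_{l,i} ∈ C_G(b_k); and (2) for all k < l in ℕ, all i < n, and every element w of the subgroup of G generated by H ∪ {a_{k,0}, …, a_{k,n−1}}, we have a_{l,i} ∈ C_G(w⁻¹ b_k w). -/
/-!
Everything reduces to the observation that `Z(H)` commutes with all the `a_{l,i}` and `b_k`: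
`b_k` commutes with `Z(H)` by (ii) (as `Z(H) ⊆ H ⊆ E_k` and `Z(H)` commutes with `H`), and
`a_{l,i}` even commutes with all of `H` by (i). Then for `l < k` the element `a_{l,i} ∈ E_k`
commutes with `H`, so (ii) applies to it; for `k < l`, both `b_k` and any conjugate `w⁻¹ b_k w`
with `w ∈ ⟨H, a_{k,0}, …, a_{k,n-1}⟩` lie in `E_l` and commute with `Z(H)`, so (i) applies.
-/

/-- The center of a subgroup `H` of `G`, viewed as a subgroup of `G`:
`Z(H) = H ⊓ C_G(H)`. -/
def subgroupCenter {G : Type*} [Group G] (H : Subgroup G) : Subgroup G :=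
  H ⊓ Subgroup.centralizer (H : Set G)

/-- `E_l`: the subgroup of `G` generated by `H ∪ {a_{k,j}, b_k : k < l, j < n}`. -/
def witnessEnv {G : Type*} [Group G] (H : Subgroup G) {n : ℕ}
    (a : ℕ → Fin n → G) (b : ℕ → G) (l : ℕ) : Subgroup G :=
  Subgroup.closure ((H : Set G) ∪ {x | ∃ k < l, (∃ j : Fin n, x = a k j) ∨ x = b k})

/-- `(a, b)` is an `H`-witness sequence of width `n` in `G`. -/
def IsHWitnessSeq {G : Type*} [Group G] (H : Subgroup G) (n : ℕ)
    (a : ℕ → Fin n → G) (b : ℕ → G) : Prop :=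
  ∀ l : ℕ,
    (∀ i : Fin n, ∀ g ∈ witnessEnv H a b l,
        subgroupCenter H ≤ Subgroup.centralizer {g} →
        a l i ∈ Subgroup.centralizer {g}) ∧
    (∀ g ∈ witnessEnv H a b l,
        H ≤ Subgroup.centralizer {g} → b l ∈ Subgroup.centralizer {g}) ∧
    (∀ i j : Fin n, i < j → (a l i)⁻¹ * a l j ∉ Subgroup.centralizer {b l})

open Subgroup

section Centralizer

variable {G : Type*} [Group G]

theorem Subgroup.le_centralizer_singleton_iff {K : Subgroup G} {g : G} :
    K ≤ centralizer {g} ↔ g ∈ centralizer (K : Set G) :=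
  ⟨fun h _x hx => (h hx g rfl).symm, fun h x hx _y hy => hy ▸ (h x hx).symm⟩

theorem le_centralizer_subgroupCenter (H : Subgroup G) :
    H ≤ centralizer (subgroupCenter H : Set G) :=
  le_centralizer_iff.mp inf_le_right

end Centralizer

section WitnessEnv

variable {G : Type*} [Group G] {H : Subgroup G} {n : ℕ} {a : ℕ → Fin n → G} {b : ℕ → G}

theorem le_witnessEnv (l : ℕ) : H ≤ witnessEnv H a b l :=
  fun _ hx => subset_closure (Or.inl hx)

theorem a_mem_witnessEnv {k l : ℕ} (hkl : k < l) (j : Fin n) : a k j ∈ witnessEnv H a b l :=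
  subset_closure (Or.inr ⟨k, hkl, Or.inl ⟨j, rfl⟩⟩)

theorem b_mem_witnessEnv {k l : ℕ} (hkl : k < l) : b k ∈ witnessEnv H a b l :=
  subset_closure (Or.inr ⟨k, hkl, Or.inr rfl⟩)

theorem closure_a_le_witnessEnv {k l : ℕ} (hkl : k < l) :
    closure ((H : Set G) ∪ {x | ∃ j : Fin n, x = a k j}) ≤ witnessEnv H a b l :=
  (closure_le _).mpr <| by
    rintro x (hx | ⟨j, rfl⟩)
    exacts [le_witnessEnv l hx, a_mem_witnessEnv hkl j]

end WitnessEnv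

namespace IsHWitnessSeq

variable {G : Type*} [Group G] {H : Subgroup G} {n : ℕ} {a : ℕ → Fin n → G} {b : ℕ → G}

theorem commute_a (hw : IsHWitnessSeq H n a b) {l : ℕ} (i : Fin n) {g : G}
    (hg : g ∈ witnessEnv H a b l ⊓ centralizer (subgroupCenter H : Set G)) :
    Commute (a l i) g :=
  mem_centralizer_singleton_iff.mp <|
    (hw l).1 i g hg.1 (le_centralizer_singleton_iff.mpr hg.2)

theorem commute_b (hw : IsHWitnessSeq H n a b) {l : ℕ} {g : G}
    (hg : g ∈ witnessEnv H a b l ⊓ centralizer (H : Set G)) :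
    Commute (b l) g :=
  mem_centralizer_singleton_iff.mp <| (hw l).2.1 g hg.1 (le_centralizer_singleton_iff.mpr hg.2)

theorem b_mem_centralizer_subgroupCenter (hw : IsHWitnessSeq H n a b) (k : ℕ) :
    b k ∈ centralizer (subgroupCenter H : Set G) :=
  fun _z hz => (hw.commute_b ⟨le_witnessEnv k hz.1, hz.2⟩).eq.symm

theorem a_mem_centralizer (hw : IsHWitnessSeq H n a b) (l : ℕ) (i : Fin n) :
    a l i ∈ centralizer (H : Set G) :=
  fun _h hh =>
    (hw.commute_a i ⟨le_witnessEnv l hh, le_centralizer_subgroupCenter H hh⟩).eq.symm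

theorem closure_a_le_centralizer_subgroupCenter (hw : IsHWitnessSeq H n a b) (k : ℕ) :
    closure ((H : Set G) ∪ {x | ∃ j : Fin n, x = a k j}) ≤
      centralizer (subgroupCenter H : Set G) :=
  (closure_le _).mpr <| by
    rintro x (hx | ⟨j, rfl⟩)
    · exact le_centralizer_subgroupCenter H hx
    · exact centralizer_le inf_le_left (hw.a_mem_centralizer k j)

end IsHWitnessSeq

theorem witness_seq_commutation {G : Type*} [Group G] (H : Subgroup G) (n : ℕ)
    (a : ℕ → Fin n → G) (b : ℕ → G) (hw : IsHWitnessSeq H n a b) :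
    (∀ l k : ℕ, l ≠ k → ∀ i : Fin n, a l i ∈ Subgroup.centralizer {b k}) ∧
    (∀ k l : ℕ, k < l → ∀ i : Fin n,
      ∀ w ∈ Subgroup.closure ((H : Set G) ∪ {x | ∃ j : Fin n, x = a k j}),
        a l i ∈ Subgroup.centralizer {w⁻¹ * b k * w}) := by
  refine ⟨fun l k hlk i => ?_, fun k l hkl i w hw_mem => ?_⟩
  · rw [mem_centralizer_singleton_iff]
    rcases hlk.lt_or_gt with hlk | hkl
    · exact (hw.commute_b ⟨a_mem_witnessEnv hlk i, hw.a_mem_centralizer l i⟩).eq.symm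
    · exact (hw.commute_a i ⟨b_mem_witnessEnv hkl, hw.b_mem_centralizer_subgroupCenter k⟩).eq
  · have hb : b k ∈ witnessEnv H a b l ⊓ centralizer (subgroupCenter H : Set G) :=
      ⟨b_mem_witnessEnv hkl, hw.b_mem_centralizer_subgroupCenter k⟩
    have hw' : w ∈ witnessEnv H a b l ⊓ centralizer (subgroupCenter H : Set G) :=
      ⟨closure_a_le_witnessEnv hkl hw_mem, hw.closure_a_le_centralizer_subgroupCenter k hw_mem⟩
    exact mem_centralizer_singleton_iff.mpr
      (hw.commute_a i (mul_mem (mul_mem (inv_mem hw') hb) hw')).eq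
end

section
/- Let G be a group and H an abelian subgroup of G. Suppose that G has no TP₂-pattern for cosets of centralizers and that G is H-centralizer-saturated. Then there exist a finite subset F ⊆ {g ∈ G : H ⊆ C_G(g)} and a natural number n such that the subgroup A := ⋂_{g∈F} C_G(g) contains H and satisfies [A : C_A(a)] ≤ n for every a ∈ A; in particular the derived subgroup [A,A] is finite, so A is finite-by-abelian. -/
open scoped Pointwise

/-- `G` admits a TP₂-pattern for cosets of centralizers, of width `n`. -/
def HasCosetTP2Pattern (G : Type*) [Group G] (n : ℕ) : Prop :=
  ∃ (a : ℕ → Fin n → G) (b : ℕ → G),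
    (∀ l : ℕ, ∀ i j : Fin n, i ≠ j →
      Disjoint (a l i • (Subgroup.centralizer {b l} : Set G))
               (a l j • (Subgroup.centralizer {b l} : Set G))) ∧
    (∀ m : ℕ, ∀ f : ℕ → Fin n, ∃ x : G, ∀ l ≤ m,
      x ∈ a l (f l) • (Subgroup.centralizer {b l} : Set G))

/-- `G` has no TP₂-pattern for cosets of centralizers. -/
def NoCosetTP2Pattern (G : Type*) [Group G] : Prop :=
  ∃ n : ℕ, ¬ HasCosetTP2Pattern G n

/-- The condition on `a₀, …, aₙ, b` relative to a parameter set `F`: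
each `aᵢ` centralizes every `g ∈ F` with `Z(H) ⊆ C_G(g)`, `b` centralizes every
`g ∈ F` with `H ⊆ C_G(g)`, and the `aᵢ` lie in pairwise distinct cosets of `C_G(b)`. -/
def WitnessTriple {G : Type*} [Group G] (H : Subgroup G) (n : ℕ)
    (F : Set G) (a : Fin (n + 1) → G) (b : G) : Prop :=
  (∀ i : Fin (n + 1), ∀ g ∈ F,
      subgroupCenter H ≤ Subgroup.centralizer {g} → a i ∈ Subgroup.centralizer {g}) ∧
  (∀ g ∈ F, H ≤ Subgroup.centralizer {g} → b ∈ Subgroup.centralizer {g}) ∧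
  (∀ i j : Fin (n + 1), i < j → (a i)⁻¹ * a j ∉ Subgroup.centralizer {b})

/-- `G` is `H`-centralizer-saturated: for every `n` and every `S ⊆ G` of size at most
`max(|H|, ℵ₀)`, if the witness condition is realized over every finite subset of `S`,
then it is realized over `S` itself. -/
def CentralizerSaturated (G : Type*) [Group G] (H : Subgroup G) : Prop :=
  ∀ (n : ℕ) (S : Set G), Cardinal.mk S ≤ max (Cardinal.mk H) Cardinal.aleph0 →
    (∀ F : Finset G, ↑F ⊆ S → ∃ (a : Fin (n + 1) → G) (b : G), WitnessTriple H n ↑F a b) →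
    ∃ (a : Fin (n + 1) → G) (b : G), WitnessTriple H n S a b

/-!
Adjoin witnesses step by step, starting from `H`: if every set of parameters of size at most
`max(|H|, ℵ₀)` that contains and centralizes `H` carried `n + 1` elements in pairwise
distinct cosets of some `C_G(b)`, the witnesses found at later steps would commute with all
parameters adjoined earlier, and the rows would form a TP₂-pattern of width `n + 1`. So some such set carries no
witness, and by saturation a finite subset `F` of it carries none either: in
`A = ⋂_{g ∈ F} C_G(g)` every centralizer has index at most `n`. Then `[A, A]` is finite by
B. H. Neumann's BFC theorem.

For the BFC theorem, pick `a` with a largest conjugacy class and let `U` (of finite index)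
centralize a transversal of `C_G(a)`. For `u ∈ U` the class of `u a` contains `u • a^G`, hence
equals it, so `[u⁻¹, g] ∈ a^G (a^G)⁻¹` for every `g`. By Dietzmann's lemma this finite normal set
of torsion elements generates a finite normal subgroup `N`; `U` maps into the centre of `G / N`,
and Schur's theorem makes `(G / N)'`, hence `G'`, finite.
-/

open Subgroup MulAction
open scoped commutatorElement

section FCGroup

variable {G : Type*} [Group G]

theorem ncard_orbit_conjAct (g : G) :
    (orbit (ConjAct G) g).ncard = (centralizer {g}).index := by
  rw [← index_stabilizer, centralizer_eq_comap_stabilizer]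
  exact (index_comap_of_surjective _ ConjAct.toConjAct.surjective).symm

theorem conj_mem_orbit_conjAct (c g : G) : c * g * c⁻¹ ∈ orbit (ConjAct G) g :=
  ⟨ConjAct.toConjAct c, ConjAct.toConjAct_smul c g⟩

theorem exists_conj_eq_of_mem_orbit_conjAct {g h : G} (hh : h ∈ orbit (ConjAct G) g) :
    ∃ c, c * g * c⁻¹ = h :=
  isConj_iff.mp (ConjAct.mem_orbit_conjAct.mp hh).symm

theorem finiteIndex_centralizer_of_finite (hFC : ∀ g : G, (centralizer {g}).FiniteIndex)
    {s : Set G} (hs : s.Finite) : (centralizer s).FiniteIndex := by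
  rw [centralizer_eq_iInf, iInf_subtype']
  have := hs.to_subtype
  exact finiteIndex_iInf fun g => hFC g

theorem commutatorElement_mul_left_of_mem_center {x y z : G} (hz : z ∈ center G) :
    ⁅x * z, y⁆ = ⁅x, y⁆ := by
  have hzy : z * y * z⁻¹ = y := by rw [← mem_center_iff.mp hz y, mul_inv_cancel_right]
  simp only [commutatorElement_def, mul_inv_rev, ← mul_assoc]
  rw [mul_assoc x z y, mul_assoc x (z * y), hzy]

theorem commutatorElement_mul_right_of_mem_center {x y z : G} (hz : z ∈ center G) :
    ⁅x, y * z⁆ = ⁅x, y⁆ := by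
  rw [← commutatorElement_inv, commutatorElement_mul_left_of_mem_center hz, commutatorElement_inv]

instance finite_commutatorSet_of_finiteIndex_center [(center G).FiniteIndex] :
    Finite (commutatorSet G) := by
  refine Set.Finite.subset (Set.finite_range
    fun p : (G ⧸ center G) × (G ⧸ center G) => ⁅p.1.out, p.2.out⁆) ?_
  rintro _ ⟨x, y, rfl⟩
  obtain ⟨z, hz⟩ := QuotientGroup.mk_out_eq_mul (center G) x
  obtain ⟨w, hw⟩ := QuotientGroup.mk_out_eq_mul (center G) y
  refine ⟨(x, y), ?_⟩
  dsimp only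
  rw [hz, hw, commutatorElement_mul_left_of_mem_center z.2,
    commutatorElement_mul_right_of_mem_center w.2]

theorem isOfFinOrder_commutatorElement_of_finiteIndex_center [(center G).FiniteIndex]
    (x y : G) : IsOfFinOrder ⁅x, y⁆ := by
  -- `g ↦ g ^ [G : Z(G)]` is the transfer into the abelian group `Z(G)`, so it kills commutators
  refine isOfFinOrder_iff_pow_eq_one.mpr
    ⟨(center G).index, Nat.pos_of_ne_zero FiniteIndex.index_ne_zero, ?_⟩
  rw [← MonoidHom.transferCenterPow_apply, map_commutatorElement,
    commutatorElement_eq_one_iff_commute.mpr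
    (Subtype.ext (mem_center_iff.mp (MonoidHom.transferCenterPow G y).2 _)), OneMemClass.coe_one]

theorem isOfFinOrder_commutatorElement (hFC : ∀ g : G, (centralizer {g}).FiniteIndex)
    (x y : G) : IsOfFinOrder ⁅x, y⁆ := by
  set K := closure {x, y}
  have hcenter : (centralizer {x, y}).subgroupOf K ≤ center K := by
    intro k hk
    rw [mem_subgroupOf, ← centralizer_closure] at hk
    exact mem_center_iff.mpr fun g => Subtype.ext (hk g g.2)
  have := finiteIndex_centralizer_of_finite hFC (s := {x, y}) (by simp)
  have : (center K).FiniteIndex := finiteIndex_of_le hcenter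
  have hK := isOfFinOrder_commutatorElement_of_finiteIndex_center
    (⟨x, subset_closure (by simp)⟩ : K) ⟨y, subset_closure (by simp)⟩
  exact K.subtype.isOfFinOrder hK

end FCGroup

section Dietzmann

variable {G : Type*} [Group G] {X : Set G}

theorem exists_prod_eq_pow_count_mul [DecidableEq G]
    (hX : ∀ y ∈ X, ∀ g : G, g * y * g⁻¹ ∈ X) (x : G) : ∀ l : List G, (∀ y ∈ l, y ∈ X) →
      ∃ l' : List G, (∀ y ∈ l', y ∈ X) ∧ l'.length + l.count x = l.length ∧
        l.prod = x ^ l.count x * l'.prod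
  | [], _ => ⟨[], by simp⟩
  | y :: l, hl => by
    obtain ⟨l', hl'X, hlen, hprod⟩ :=
      exists_prod_eq_pow_count_mul hX x l fun z hz => hl z (List.mem_cons_of_mem _ hz)
    by_cases hyx : y = x
    · subst hyx
      refine ⟨l', hl'X, ?_, ?_⟩
      · simp only [List.count_cons_self, List.length_cons]
        omega
      · rw [List.prod_cons, List.count_cons_self, hprod, pow_succ', mul_assoc]
    · refine ⟨(x ^ l.count x)⁻¹ * y * x ^ l.count x :: l', ?_, ?_, ?_⟩
      · simp only [List.mem_cons, forall_eq_or_imp]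
        exact ⟨by simpa using hX y (hl y List.mem_cons_self) (x ^ l.count x)⁻¹, hl'X⟩
      · simp only [List.length_cons, List.count_cons_of_ne hyx]
        omega
      · rw [List.prod_cons, List.count_cons_of_ne hyx, hprod, List.prod_cons]
        group

theorem exists_prod_eq_of_count_lt_orderOf [DecidableEq G]
    (hX : ∀ y ∈ X, ∀ g : G, g * y * g⁻¹ ∈ X) (htor : ∀ x ∈ X, IsOfFinOrder x) (l : List G)
    (hl : ∀ y ∈ l, y ∈ X) :
    ∃ l' : List G, (∀ y ∈ l', y ∈ X) ∧ (∀ x ∈ X, l'.count x < orderOf x) ∧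
      l'.prod = l.prod := by
  induction hlen : l.length using Nat.strong_induction_on generalizing l with
  | _ k ih =>
    by_cases hcount : ∀ x ∈ X, l.count x < orderOf x
    · exact ⟨l, hl, hcount, rfl⟩
    push Not at hcount
    obtain ⟨x, hxX, hx⟩ := hcount
    obtain ⟨l', hl'X, hlen', hprod⟩ := exists_prod_eq_pow_count_mul hX x l hl
    have hpos := (htor x hxX).orderOf_pos
    refine ih (l.count x - orderOf x + l'.length) (by omega)
      (List.replicate (l.count x - orderOf x) x ++ l') ?_ (by simp) |>.imp fun _ h => ?_
    · simpa [or_imp, forall_and] using ⟨fun _ => hxX, hl'X⟩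
    · refine ⟨h.1, h.2.1, ?_⟩
      rw [h.2.2, List.prod_append, List.prod_replicate, hprod, ← pow_sub_mul_pow x hx,
        pow_orderOf_eq_one, mul_one]

/-- Dietzmann's lemma. -/
theorem finite_closure_of_conj_mem (hfin : X.Finite)
    (hX : ∀ y ∈ X, ∀ g : G, g * y * g⁻¹ ∈ X) (htor : ∀ x ∈ X, IsOfFinOrder x) :
    (closure X : Set G).Finite := by
  classical
  set N := ∑ x ∈ hfin.toFinset, orderOf x
  have hlists : {l : List G | (∀ y ∈ l, y ∈ X) ∧ l.length ≤ N}.Finite := by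
    have := hfin.to_subtype
    refine ((List.finite_length_le X N).image (List.map Subtype.val)).subset ?_
    rintro l ⟨hlX, hlen⟩
    lift l to List X using hlX
    exact ⟨l, by simpa using hlen, rfl⟩
  refine (hlists.image List.prod).subset fun g hg => ?_
  have hg' : g ∈ (closure X).toSubmonoid := hg
  rw [closure_toSubmonoid_of_isOfFinOrder htor] at hg'
  obtain ⟨l, hlX, rfl⟩ := Submonoid.exists_list_of_mem_closure hg'
  obtain ⟨l', hl'X, hcount, hprod⟩ := exists_prod_eq_of_count_lt_orderOf hX htor l hlX
  refine ⟨l', ⟨hl'X, ?_⟩, hprod⟩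
  calc l'.length = ∑ x ∈ hfin.toFinset, l'.count x := by
        simpa using (Multiset.sum_count_eq_card (s := hfin.toFinset) (m := (l' : Multiset G))
          (by simpa using hl'X)).symm
    _ ≤ N := Finset.sum_le_sum fun x hx => (hcount x (hfin.mem_toFinset.mp hx)).le

end Dietzmann

section BFC

variable {G : Type*} [Group G]

theorem conj_mem_orbit_conjAct_of_mem {a b : G} (hb : b ∈ orbit (ConjAct G) a) (g : G) :
    g * b * g⁻¹ ∈ orbit (ConjAct G) a := by
  obtain ⟨c, rfl⟩ := exists_conj_eq_of_mem_orbit_conjAct hb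
  simpa [mul_assoc] using conj_mem_orbit_conjAct (g * c) a

theorem out_mul_mul_out_inv (a c : G) :
    (c : G ⧸ centralizer {a}).out * a * (c : G ⧸ centralizer {a}).out⁻¹ =
      c * a * c⁻¹ := by
  obtain ⟨z, hz⟩ := QuotientGroup.mk_out_eq_mul (centralizer {a}) c
  rw [hz, mul_inv_rev, mul_assoc c, mem_centralizer_singleton_iff.mp z.2]
  group

theorem orbit_conjAct_mul_eq_smul (hFC : ∀ g : G, (centralizer {g}).FiniteIndex) {a u : G}
    (hmax : ∀ g : G, (centralizer {g}).index ≤ (centralizer {a}).index)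
    (hu : ∀ c : G, ∃ t, Commute u t ∧ t * a * t⁻¹ = c * a * c⁻¹) :
    orbit (ConjAct G) (u * a) = u • orbit (ConjAct G) a := by
  symm
  refine Set.eq_of_subset_of_ncard_le ?_ ?_ (Set.finite_of_ncard_ne_zero ?_)
  · intro x hx
    obtain ⟨b, hb, rfl⟩ := Set.mem_smul_set.mp hx
    obtain ⟨c, rfl⟩ := exists_conj_eq_of_mem_orbit_conjAct hb
    obtain ⟨t, hut, hta⟩ := hu c
    have : t * (u * a) * t⁻¹ = u • (c * a * c⁻¹) := by
      rw [smul_eq_mul, ← hta, ← mul_assoc t, ← hut.eq, mul_assoc u, mul_assoc u]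
    exact this ▸ conj_mem_orbit_conjAct t (u * a)
  · rw [Set.ncard_smul_set, ncard_orbit_conjAct, ncard_orbit_conjAct]
    exact hmax _
  · rw [ncard_orbit_conjAct]
    exact (hFC _).index_ne_zero

theorem commutatorElement_inv_mem_orbit_mul_inv (hFC : ∀ g : G, (centralizer {g}).FiniteIndex)
    {a u : G} (hmax : ∀ g : G, (centralizer {g}).index ≤ (centralizer {a}).index)
    (hu : ∀ c : G, ∃ t, Commute u t ∧ t * a * t⁻¹ = c * a * c⁻¹) (g : G) :
    ⁅u⁻¹, g⁆ ∈ orbit (ConjAct G) a * (orbit (ConjAct G) a)⁻¹ := by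
  have hg : g * (u * a) * g⁻¹ ∈ u • orbit (ConjAct G) a :=
    orbit_conjAct_mul_eq_smul hFC hmax hu ▸ conj_mem_orbit_conjAct g (u * a)
  obtain ⟨b, hb, hbg⟩ := Set.mem_smul_set.mp hg
  refine Set.mem_mul.mpr
    ⟨b, hb, (g * a * g⁻¹)⁻¹, by simpa using conj_mem_orbit_conjAct g a, ?_⟩
  rw [smul_eq_mul] at hbg
  rw [eq_inv_mul_of_mul_eq hbg, commutatorElement_def]
  group

theorem finite_orbit_mul_inv (a : G) [(centralizer {a}).FiniteIndex] :
    (orbit (ConjAct G) a * (orbit (ConjAct G) a)⁻¹).Finite := by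
  have hO : (orbit (ConjAct G) a).Finite := by
    refine Set.finite_of_ncard_ne_zero ?_
    rw [ncard_orbit_conjAct]
    exact FiniteIndex.index_ne_zero
  exact hO.mul hO.inv

theorem conj_mem_orbit_mul_inv {a x : G}
    (hx : x ∈ orbit (ConjAct G) a * (orbit (ConjAct G) a)⁻¹) (g : G) :
    g * x * g⁻¹ ∈ orbit (ConjAct G) a * (orbit (ConjAct G) a)⁻¹ := by
  obtain ⟨p, hp, q, hq, rfl⟩ := Set.mem_mul.mp hx
  refine Set.mem_mul.mpr
    ⟨g * p * g⁻¹, conj_mem_orbit_conjAct_of_mem hp g, g * q * g⁻¹, ?_, by group⟩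
  simpa [mul_assoc] using conj_mem_orbit_conjAct_of_mem (Set.mem_inv.mp hq) g

theorem isOfFinOrder_of_mem_orbit_mul_inv (hFC : ∀ g : G, (centralizer {g}).FiniteIndex)
    {a x : G} (hx : x ∈ orbit (ConjAct G) a * (orbit (ConjAct G) a)⁻¹) : IsOfFinOrder x := by
  obtain ⟨p, hp, q, hq, rfl⟩ := Set.mem_mul.mp hx
  obtain ⟨c, rfl⟩ := exists_conj_eq_of_mem_orbit_conjAct hp
  obtain ⟨d, hd⟩ := exists_conj_eq_of_mem_orbit_conjAct (Set.mem_inv.mp hq)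
  have : c * a * c⁻¹ * q = MulAut.conj c ⁅a, c⁻¹ * d⁆ := by
    rw [← inv_inv q, ← hd, MulAut.conj_apply, commutatorElement_def]
    group
  rw [this]
  exact (MulAut.conj c).toMonoidHom.isOfFinOrder (isOfFinOrder_commutatorElement hFC _ _)

theorem normalClosure_eq_closure_of_conj_mem {X : Set G}
    (hX : ∀ y ∈ X, ∀ g : G, g * y * g⁻¹ ∈ X) :
    normalClosure X = closure X := by
  refine le_antisymm (closure_mono fun x hx => ?_) (closure_mono Group.subset_conjugatesOfSet)
  obtain ⟨y, hy, hyx⟩ := Group.mem_conjugatesOfSet_iff.mp hx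
  obtain ⟨g, rfl⟩ := isConj_iff.mp hyx
  exact hX y hy g

theorem finite_commutator_of_finite_commutator_quotient (N : Subgroup G) [N.Normal]
    (hN : (N : Set G).Finite) [Finite (commutator (G ⧸ N))] : Finite (commutator G) := by
  have hle : commutator G ≤ (commutator (G ⧸ N)).comap (QuotientGroup.mk' N) := by
    rw [← map_le_iff_le_comap, map_commutator_eq]
    exact commutator_mono le_top le_top
  suffices ((commutator G : Subgroup G) : Set G).Finite from this.to_subtype
  refine Set.Finite.subset ((Set.toFinite (commutator (G ⧸ N) : Set (G ⧸ N))).preimage'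
    (f := QuotientGroup.mk' N) ?_) hle
  rintro q -
  obtain ⟨x, rfl⟩ := QuotientGroup.mk'_surjective N q
  refine (hN.image (x * ·)).subset fun y hy => ⟨x⁻¹ * y, ?_, mul_inv_cancel_left x y⟩
  exact QuotientGroup.eq.mp hy.symm

theorem exists_forall_index_centralizer_le {n : ℕ} (h : ∀ g : G, (centralizer {g}).index ≤ n) :
    ∃ a : G, ∀ g : G, (centralizer {g}).index ≤ (centralizer {a}).index := by
  have hbdd : BddAbove (Set.range fun g : G => (centralizer {g}).index) :=
    ⟨n, by rintro _ ⟨g, rfl⟩; exact h g⟩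
  obtain ⟨a, ha⟩ := Nat.sSup_mem (Set.range_nonempty _) hbdd
  refine ⟨a, fun g => ?_⟩
  rw [show (centralizer {a}).index = _ from ha]
  exact le_csSup hbdd ⟨g, rfl⟩

/-- B. H. Neumann's BFC theorem. -/
theorem finite_commutator_of_index_centralizer_le {n : ℕ}
    (h : ∀ g : G, (centralizer {g}).index ≠ 0 ∧ (centralizer {g}).index ≤ n) :
    Finite (commutator G) := by
  have hFC : ∀ g : G, (centralizer {g}).FiniteIndex := fun g => ⟨(h g).1⟩
  obtain ⟨a, hmax⟩ := exists_forall_index_centralizer_le fun g => (h g).2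
  set X := orbit (ConjAct G) a * (orbit (ConjAct G) a)⁻¹
  set U := centralizer (Set.range fun q : G ⧸ centralizer {a} => q.out)
  have : U.FiniteIndex := finiteIndex_centralizer_of_finite hFC (Set.finite_range _)
  have hUX : ∀ u ∈ U, ∀ g : G, ⁅u⁻¹, g⁆ ∈ X := fun u hu =>
    commutatorElement_inv_mem_orbit_mul_inv hFC hmax fun c =>
      ⟨_, (mem_centralizer_iff.mp hu _ ⟨c, rfl⟩).symm, out_mul_mul_out_inv a c⟩
  have hN : (normalClosure X : Set G).Finite := by
    rw [normalClosure_eq_closure_of_conj_mem fun x hx => conj_mem_orbit_mul_inv hx]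
    exact finite_closure_of_conj_mem (finite_orbit_mul_inv a)
      (fun x hx => conj_mem_orbit_mul_inv hx) fun x hx => isOfFinOrder_of_mem_orbit_mul_inv hFC hx
  set N := normalClosure X
  have hUcenter : U ≤ (center (G ⧸ N)).comap (QuotientGroup.mk' N) := by
    intro u hu
    refine mem_center_iff.mpr fun q => ?_
    obtain ⟨g, rfl⟩ := QuotientGroup.mk'_surjective N q
    have : ⁅(QuotientGroup.mk' N u)⁻¹, QuotientGroup.mk' N g⁆ = 1 := by
      rw [← map_inv, ← map_commutatorElement, QuotientGroup.mk'_apply, QuotientGroup.eq_one_iff]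
      exact subset_normalClosure (hUX u hu g)
    exact (Commute.inv_left_iff.mp (commutatorElement_eq_one_iff_commute.mp this)).symm.eq
  have : (center (G ⧸ N)).FiniteIndex := by
    have := finiteIndex_of_le hUcenter
    constructor
    rw [← index_comap_of_surjective _ (QuotientGroup.mk'_surjective N)]
    exact FiniteIndex.index_ne_zero
  -- Schur's theorem, a Mathlib instance, now gives `Finite (commutator (G ⧸ N))`
  exact finite_commutator_of_finite_commutator_quotient N hN

theorem Subgroup.finite_commutator_of_relIndex_centralizer_le (A : Subgroup G) {n : ℕ}
    (h : ∀ a ∈ A, (centralizer {a}).relIndex A ≠ 0 ∧ (centralizer {a}).relIndex A ≤ n) :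
    ((⁅A, A⁆ : Subgroup G) : Set G).Finite := by
  have hA : ∀ u : A, (centralizer {u}).index ≠ 0 ∧ (centralizer {u}).index ≤ n := fun u => by
    have : (centralizer {u} : Subgroup A) = (centralizer {(u : G)}).subgroupOf A := by
      ext v
      simp [mem_subgroupOf, mem_centralizer_singleton_iff, Subtype.ext_iff]
    rw [this]
    exact h u u.2
  have := finite_commutator_of_index_centralizer_le hA
  rw [← A.map_subtype_commutator, coe_map]
  exact (Set.toFinite _).image _

end BFC

section CosetPattern

variable {G : Type*} [Group G]

theorem hasCosetTP2Pattern_zero : HasCosetTP2Pattern G 0 :=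
  ⟨fun _ => Fin.elim0, fun _ => 1, fun _ i => i.elim0, fun _ f => ⟨1, fun l _ => (f l).elim0⟩⟩

theorem disjoint_smul_subgroup {K : Subgroup G} {x y : G} (h : x⁻¹ * y ∉ K) :
    Disjoint (x • (K : Set G)) (y • (K : Set G)) := by
  refine Set.disjoint_left.mpr fun z hx hy => h ?_
  rw [mem_leftCoset_iff] at hx hy
  simpa [mul_assoc] using K.mul_mem hx (K.inv_mem hy)

theorem hasCosetTP2Pattern_of_commute {n : ℕ} (a : ℕ → Fin n → G) (b : ℕ → G)
    (hrow : ∀ l, ∀ i j : Fin n, i < j → (a l i)⁻¹ * a l j ∉ centralizer {b l})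
    (haa : ∀ k l, k < l → ∀ i j, Commute (a l i) (a k j))
    (hba : ∀ k l, k < l → ∀ j, Commute (b l) (a k j))
    (hab : ∀ k l, k < l → ∀ i, Commute (a l i) (b k)) :
    HasCosetTP2Pattern G n := by
  refine ⟨a, b, fun l i j hij => ?_, fun m f => ?_⟩
  · rcases hij.lt_or_gt with h | h
    · exact disjoint_smul_subgroup (hrow l i j h)
    · exact (disjoint_smul_subgroup (hrow l j i h)).symm
  -- the product of the chosen representatives of the rows `< m` lies in each of their cosets
  have key : ∀ m, ∃ x : G, (∀ l < m, x ∈ a l (f l) • (centralizer {b l} : Set G)) ∧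
      ∀ l ≥ m, Commute x (b l) ∧ ∀ i, Commute x (a l i) := by
    intro m
    induction m with
    | zero =>
      exact ⟨1, fun l hl => absurd hl l.not_lt_zero,
        fun l _ => ⟨.one_left _, fun _ => .one_left _⟩⟩
    | succ m ih =>
      obtain ⟨x, hx, hxc⟩ := ih
      refine ⟨x * a m (f m), fun l hl => ?_, fun l hl => ⟨?_, fun i => ?_⟩⟩
      · rw [mem_leftCoset_iff]
        rcases (Nat.lt_succ_iff.mp hl).lt_or_eq with hl | rfl
        · rw [← mul_assoc]
          exact mul_mem ((mem_leftCoset_iff _).mp (hx l hl))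
            (mem_centralizer_singleton_iff.mpr (hab l m hl (f m)).eq)
        · rw [((hxc l le_rfl).2 (f l)).eq, inv_mul_cancel_left]
          exact mem_centralizer_singleton_iff.mpr (hxc l le_rfl).1.eq
      · exact (hxc l (Nat.le_of_succ_le hl)).1.mul_left (hba m l hl (f m)).symm
      · exact ((hxc l (Nat.le_of_succ_le hl)).2 i).mul_left (haa m l hl i (f m)).symm
  obtain ⟨x, hx, -⟩ := key (m + 1)
  exact ⟨x, fun l hl => hx l (Nat.lt_succ_of_le hl)⟩

end CosetPattern

section Envelope

variable {G : Type*} [Group G] {H : Subgroup G} {n : ℕ}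

theorem Subgroup.exists_pairwise_inv_mul_notMem (K A : Subgroup G)
    (h : ¬ (K.relIndex A ≠ 0 ∧ K.relIndex A ≤ n)) :
    ∃ a : Fin (n + 1) → G, (∀ i, a i ∈ A) ∧ ∀ i j, i < j → (a i)⁻¹ * a j ∉ K := by
  obtain ⟨f, hf⟩ : ∃ f : Fin (n + 1) → A ⧸ K.subgroupOf A, Function.Injective f := by
    rcases finite_or_infinite (A ⧸ K.subgroupOf A) with hfin | hinf
    · have hcard : n + 1 ≤ Nat.card (A ⧸ K.subgroupOf A) := by
        rw [relIndex, index_eq_card] at h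
        have := Nat.card_pos (α := A ⧸ K.subgroupOf A)
        omega
      exact ⟨(Finite.equivFin _).symm ∘ Fin.castLE hcard,
        (Finite.equivFin _).symm.injective.comp (Fin.castLE_injective hcard)⟩
    · exact ⟨fun i => Infinite.natEmbedding _ i,
        (Infinite.natEmbedding _).injective.comp Fin.val_injective⟩
  refine ⟨fun i => (f i).out, fun i => (f i).out.2, fun i j hij hK => hij.ne (hf ?_)⟩
  rw [← QuotientGroup.out_eq' (f i), ← QuotientGroup.out_eq' (f j), QuotientGroup.eq]
  exact mem_subgroupOf.mpr (by simpa using hK)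

theorem WitnessTriple.commute {S : Set G} {a : Fin (n + 1) → G} {b g : G}
    (hw : WitnessTriple H n S a b) (hg : g ∈ S) (hHg : H ≤ centralizer {g}) :
    (∀ i, Commute (a i) g) ∧ Commute b g :=
  ⟨fun i => mem_centralizer_singleton_iff.mp (hw.1 i g hg (inf_le_left.trans hHg)),
    mem_centralizer_singleton_iff.mp (hw.2.1 g hg hHg)⟩

theorem WitnessTriple.le_centralizer {S : Set G} {a : Fin (n + 1) → G} {b : G}
    (hab : ∀ x ∈ H, ∀ y ∈ H, x * y = y * x) (hHS : (H : Set G) ⊆ S)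
    (hw : WitnessTriple H n S a b) : ∀ g ∈ insert b (Set.range a), H ≤ centralizer {g} := by
  have hH : ∀ h ∈ H, H ≤ centralizer {h} := fun h hh k hk =>
    mem_centralizer_singleton_iff.mpr (hab k hk h hh)
  rintro g (rfl | ⟨i, rfl⟩) h hh
  · exact mem_centralizer_singleton_iff.mpr (hw.commute (hHS hh) (hH h hh)).2.symm.eq
  · exact mem_centralizer_singleton_iff.mpr ((hw.commute (hHS hh) (hH h hh)).1 i).symm.eq

theorem hasCosetTP2Pattern_of_witnessTriple_chain (S : ℕ → Set G) (a : ℕ → Fin (n + 1) → G)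
    (b : ℕ → G) (hw : ∀ l, WitnessTriple H n (S l) (a l) (b l))
    (hS : ∀ l, ∀ g ∈ S l, H ≤ centralizer {g})
    (hmem : ∀ k l, k < l → insert (b k) (Set.range (a k)) ⊆ S l) :
    HasCosetTP2Pattern G (n + 1) := by
  have hcomm : ∀ k l, k < l → ∀ g ∈ insert (b k) (Set.range (a k)),
      (∀ i, Commute (a l i) g) ∧ Commute (b l) g :=
    fun k l hkl g hg => (hw l).commute (hmem k l hkl hg) (hS l g (hmem k l hkl hg))
  exact hasCosetTP2Pattern_of_commute a b (fun l => (hw l).2.2)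
    (fun k l hkl i j => (hcomm k l hkl _ (Set.mem_insert_of_mem _ ⟨j, rfl⟩)).1 i)
    (fun k l hkl j => (hcomm k l hkl _ (Set.mem_insert_of_mem _ ⟨j, rfl⟩)).2)
    (fun k l hkl i => (hcomm k l hkl _ (Set.mem_insert _ _)).1 i)

theorem hasCosetTP2Pattern_of_forall_exists_witnessTriple
    (hab : ∀ x ∈ H, ∀ y ∈ H, x * y = y * x)
    (hall : ∀ S : Set G, (H : Set G) ⊆ S → (∀ g ∈ S, H ≤ centralizer {g}) →
      Cardinal.mk S ≤ max (Cardinal.mk H) Cardinal.aleph0 → ∃ a b, WitnessTriple H n S a b) :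
    HasCosetTP2Pattern G (n + 1) := by
  let Good := {S : Set G // (H : Set G) ⊆ S ∧ (∀ g ∈ S, H ≤ centralizer {g}) ∧
    Cardinal.mk S ≤ max (Cardinal.mk H) Cardinal.aleph0}
  choose a b hw using fun S : Good => hall S.1 S.2.1 S.2.2.1 S.2.2.2
  let next (S : Good) : Good :=
    ⟨S.1 ∪ insert (b S) (Set.range (a S)), S.2.1.trans Set.subset_union_left,
      fun g hg => hg.elim (S.2.2.1 g) ((hw S).le_centralizer hab S.2.1 g),
      (Cardinal.mk_union_le _ _).trans (Cardinal.add_le_of_le (le_max_right _ _) S.2.2.2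
        ((Set.toFinite _).lt_aleph0.le.trans (le_max_right _ _)))⟩
  let S (l : ℕ) : Good := next^[l]
    ⟨H, subset_rfl, fun h hh k hk => mem_centralizer_singleton_iff.mpr (hab k hk h hh),
      le_max_left (Cardinal.mk H) _⟩
  have hS : ∀ l, (S (l + 1)).1 = (S l).1 ∪ insert (b (S l)) (Set.range (a (S l))) := fun l => by
    simp only [S, Function.iterate_succ_apply']
    rfl
  have hmono : Monotone fun l => (S l).1 := monotone_nat_of_le_succ fun l => by
    rw [hS]
    exact Set.subset_union_left
  refine hasCosetTP2Pattern_of_witnessTriple_chain (fun l => (S l).1) (fun l => a (S l))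
    (fun l => b (S l)) (fun l => hw _) (fun l => (S l).2.2.1) fun k l hkl => ?_
  exact (hS k ▸ Set.subset_union_right).trans (hmono hkl)

theorem relIndex_centralizer_le_of_forall_not_witnessTriple {F : Finset G}
    (hF : ∀ a b, ¬ WitnessTriple H n F a b) {b : G} (hb : b ∈ ⨅ g ∈ F, centralizer {g}) :
    (centralizer {b}).relIndex (⨅ g ∈ F, centralizer {g}) ≠ 0 ∧
      (centralizer {b}).relIndex (⨅ g ∈ F, centralizer {g}) ≤ n := by
  by_contra h
  obtain ⟨a, ha, hdist⟩ := exists_pairwise_inv_mul_notMem _ _ h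
  simp only [mem_iInf] at ha hb
  exact hF a b ⟨fun i g hg _ => ha i g hg, fun g hg _ => hb g hg, hdist⟩

end Envelope

theorem abelian_envelope {G : Type*} [Group G] (H : Subgroup G)
    (hab : ∀ x ∈ H, ∀ y ∈ H, x * y = y * x)
    (hTP : NoCosetTP2Pattern G) (hsat : CentralizerSaturated G H) :
    ∃ (F : Finset G) (n : ℕ) (A : Subgroup G),
      (∀ g ∈ F, H ≤ Subgroup.centralizer {g}) ∧
      A = (⨅ g ∈ F, Subgroup.centralizer {g}) ∧
      H ≤ A ∧
      (∀ a ∈ A, (Subgroup.centralizer {a}).relIndex A ≠ 0 ∧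
                (Subgroup.centralizer {a}).relIndex A ≤ n) ∧
      ((⁅A, A⁆ : Subgroup G) : Set G).Finite := by
  obtain ⟨n₀, hno⟩ := hTP
  obtain ⟨n, rfl⟩ : ∃ n, n₀ = n + 1 :=
    Nat.exists_eq_succ_of_ne_zero fun h => hno (h ▸ hasCosetTP2Pattern_zero)
  obtain ⟨S, -, hSH, hcard, hS⟩ : ∃ S : Set G, (H : Set G) ⊆ S ∧
      (∀ g ∈ S, H ≤ centralizer {g}) ∧ Cardinal.mk S ≤ max (Cardinal.mk H) Cardinal.aleph0 ∧
      ∀ a b, ¬ WitnessTriple H n S a b := by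
    by_contra! hall
    exact hno (hasCosetTP2Pattern_of_forall_exists_witnessTriple hab hall)
  obtain ⟨F, hFS, hF⟩ : ∃ F : Finset G, ↑F ⊆ S ∧ ∀ a b, ¬ WitnessTriple H n F a b := by
    by_contra! hall
    obtain ⟨a, b, hw⟩ := hsat n S hcard hall
    exact hS a b hw
  have hFH : ∀ g ∈ F, H ≤ centralizer {g} := fun g hg => hSH g (hFS hg)
  have hbound := fun b (hb : b ∈ ⨅ g ∈ F, centralizer {g}) =>
    relIndex_centralizer_le_of_forall_not_witnessTriple hF hb
  exact ⟨F, n, _, hFH, rfl, le_iInf₂ hFH, hbound,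
    finite_commutator_of_relIndex_centralizer_le _ hbound⟩
end

section
/- Let G be a group with the following property: for every normal subgroup N of G and every abelian normal subgroup B of the quotient G/N, there exists an almost abelian normal subgroup of G/N containing B. Then for every normal solvable subgroup H of G of derived length n, there exists a chain of normal subgroups {1} = S₀ ≤ S₁ ≤ ⋯ ≤ Sₙ of G such that H ⊆ Sₙ and for each 0 ≤ i < n the quotient group S_{i+1}/S_i is almost abelian. -/
/-- A group `K` is almost abelian (an FC-group) if the centralizer of every element
has finite index. -/
def AlmostAbelian (K : Type*) [Group K] : Prop :=
  ∀ k : K, (Subgroup.centralizer ({k} : Set K)).index ≠ 0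

/-- `T / N` is almost abelian, where `N` is a normal subgroup of `G`:
the image of `T` in `G ⧸ N` is almost abelian. -/
def QuotAlmostAbelian {G : Type*} [Group G] (N T : Subgroup G) (hN : N.Normal) : Prop :=
  letI : N.Normal := hN
  AlmostAbelian ↥(T.map (QuotientGroup.mk' N))

/-!
The images `D k` of the derived series of `H` are normal in `G`, with `D 0 = H`, `D n = ⊥` and
`⁅D k, D k⁆ = D (k + 1)`. Build `S i` upwards keeping `D (n - i) ≤ S i`: the image of
`D (n - i - 1)` in `G ⧸ S i` is then an abelian normal subgroup, and the preimage of an almost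
abelian normal subgroup of `G ⧸ S i` containing it is `S (i + 1)`.
-/

theorem exists_seq_of_exists_succ {α : Type*} (P : ℕ → α → Prop) (R : α → α → Prop) {a : α}
    (ha : P 0 a) (step : ∀ i x, P i x → ∃ y, P (i + 1) y ∧ R x y) :
    ∃ s : ℕ → α, s 0 = a ∧ ∀ i, P i (s i) ∧ R (s i) (s (i + 1)) := by
  choose! f hf using step
  let s : ℕ → α := fun i => Nat.rec a f i
  have hs : ∀ i, P i (s i) := fun i => Nat.rec ha (fun i h => (hf i _ h).1) i
  exact ⟨s, rfl, fun i => ⟨hs i, (hf i _ (hs i)).2⟩⟩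

theorem exists_quotAlmostAbelian_extension {G : Type*} [Group G] (S : Subgroup G) [S.Normal]
    (hS : ∀ B : Subgroup (G ⧸ S), B.Normal → (∀ x ∈ B, ∀ y ∈ B, x * y = y * x) →
      ∃ C : Subgroup (G ⧸ S), C.Normal ∧ B ≤ C ∧ AlmostAbelian ↥C)
    {K : Subgroup G} (hK : K.Normal) (hKS : ⁅K, K⁆ ≤ S) :
    ∃ T : Subgroup G, T.Normal ∧ S ≤ T ∧ K ≤ T ∧ QuotAlmostAbelian S T ‹_› := by
  have hcomm : ∀ x ∈ K.map (QuotientGroup.mk' S), ∀ y ∈ K.map (QuotientGroup.mk' S),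
      x * y = y * x := by
    rintro _ ⟨a, ha, rfl⟩ _ ⟨b, hb, rfl⟩
    rw [← commutatorElement_eq_one_iff_mul_comm, ← map_commutatorElement,
      QuotientGroup.mk'_apply, QuotientGroup.eq_one_iff]
    exact hKS (Subgroup.commutator_mem_commutator ha hb)
  obtain ⟨C, hC, hKC, hCaa⟩ :=
    hS _ (hK.map _ (QuotientGroup.mk'_surjective S)) hcomm
  refine ⟨C.comap (QuotientGroup.mk' S), hC.comap _, ?_, Subgroup.map_le_iff_le_comap.mp hKC, ?_⟩
  · exact (QuotientGroup.ker_mk' S).ge.trans (Subgroup.ker_le_comap _ C)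
  · rwa [QuotAlmostAbelian,
      Subgroup.map_comap_eq_self_of_surjective (QuotientGroup.mk'_surjective S)]

theorem solvable_almost_series {G : Type*} [Group G]
    (hyp : ∀ (N : Subgroup G) [N.Normal] (B : Subgroup (G ⧸ N)),
      B.Normal → (∀ x ∈ B, ∀ y ∈ B, x * y = y * x) →
      ∃ C : Subgroup (G ⧸ N), C.Normal ∧ B ≤ C ∧ AlmostAbelian ↥C)
    (H : Subgroup G) (hHnormal : H.Normal) (n : ℕ)
    (hsol : derivedSeries ↥H n = ⊥) :
    ∃ S : ℕ → Subgroup G, ∃ hnorm : ∀ i, (S i).Normal,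
      S 0 = ⊥ ∧ (∀ i < n, S i ≤ S (i + 1)) ∧ H ≤ S n ∧
      ∀ i < n, QuotAlmostAbelian (S i) (S (i + 1)) (hnorm i) := by
  let D : ℕ → Subgroup G := fun k => (derivedSeries H k).map H.subtype
  have hD_normal : ∀ k, (D k).Normal := fun _ =>
    ConjAct.normal_of_characteristic_of_normal (hH := hHnormal)
  have hD_succ : ∀ k, ⁅D k, D k⁆ = D (k + 1) := fun _ => (Subgroup.map_commutator _ _ _).symm
  have hD_anti : Antitone D := fun _ _ h => Subgroup.map_mono (derivedSeries_antitone H h)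
  obtain ⟨S, hS0, hS⟩ := exists_seq_of_exists_succ
    (fun i T => T.Normal ∧ D (n - i) ≤ T) (fun T T' => T ≤ T' ∧ ∀ hT, QuotAlmostAbelian T T' hT)
    (a := ⊥) ⟨Subgroup.normal_bot, by simp [D, hsol]⟩ <| by
      rintro i T ⟨hT, hDT⟩
      obtain ⟨T', hT', hTT', hDT', hT'aa⟩ := exists_quotAlmostAbelian_extension T (hyp T)
        (hD_normal (n - (i + 1))) ((hD_succ _).trans_le ((hD_anti (by omega)).trans hDT))
      exact ⟨T', ⟨hT', hDT'⟩, hTT', fun _ => hT'aa⟩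
  refine ⟨S, fun i => (hS i).1.1, hS0, fun i _ => (hS i).2.1, ?_, fun i _ => (hS i).2.2 _⟩
  simpa [D, ← MonoidHom.range_eq_map] using (hS n).1.2
end

section
/- Let K be a group and A a normal subgroup of K such that the commutator subgroup X := [A,K] is finite and every element x ∈ X has centralizer C_K(x) of finite index in K. Then N := C_K(X) is a subgroup of finite index in K, X ∩ N is contained in the center Z(N), and A ∩ N is contained in the second center Z₂(N). -/
/-! N is the intersection of the finitely many finite-index centralizers C_K(x), x ∈ X, and
elements of X commute with everything in N = C_K(X). For a ∈ A ∩ N and n ∈ N the commutator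
[a, n] lies in [A, K] ∩ N = X ∩ N, hence in Z(N). -/

open scoped commutatorElement

namespace Subgroup

variable {G : Type*} [Group G]

theorem centralizer_eq_iInf_centralizer_singleton (S : Set G) :
    centralizer S = ⨅ x : S, centralizer {(x : G)} := by
  ext g
  simp [mem_centralizer_iff]

theorem index_centralizer_ne_zero_of_finite {S : Set G} (hS : S.Finite)
    (h : ∀ x ∈ S, (centralizer {x}).index ≠ 0) : (centralizer S).index ≠ 0 := by
  have := hS.to_subtype
  rw [centralizer_eq_iInf_centralizer_singleton]
  exact index_iInf_ne_zero fun x => h x x.2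

theorem le_centralizer_centralizer (H : Subgroup G) :
    H ≤ centralizer (centralizer (H : Set G) : Set G) :=
  Set.subset_centralizer_centralizer

theorem inv_mul_inv_mul_mul_mem_commutator_top {A : Subgroup G} {a : G} (ha : a ∈ A) (g : G) :
    a⁻¹ * g⁻¹ * a * g ∈ ⁅A, (⊤ : Subgroup G)⁆ := by
  have : a⁻¹ * g⁻¹ * a * g = ⁅a⁻¹, g⁻¹⁆ := by group
  rw [this]
  exact commutator_mem_commutator (A.inv_mem ha) (mem_top _)

end Subgroup

open Subgroup in
theorem centralizer_of_finite_commutator_general {K : Type*} [Group K]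
    (A : Subgroup K)
    (hXfin : ((⁅A, (⊤ : Subgroup K)⁆ : Subgroup K) : Set K).Finite)
    (hXcen : ∀ x ∈ (⁅A, (⊤ : Subgroup K)⁆ : Subgroup K),
      (Subgroup.centralizer ({x} : Set K)).index ≠ 0) :
    ∃ (X N Z : Subgroup K),
      X = ⁅A, (⊤ : Subgroup K)⁆ ∧
      N = Subgroup.centralizer (X : Set K) ∧
      -- Z = Z(N), the center of N viewed as a subgroup of K
      Z = N ⊓ Subgroup.centralizer (N : Set K) ∧
      -- N has finite index in K
      N.index ≠ 0 ∧
      -- X ∩ N ⊆ Z(N)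
      X ⊓ N ≤ Z ∧
      -- A ∩ N ⊆ Z₂(N): every commutator [a, n] with a ∈ A ∩ N, n ∈ N lies in Z(N)
      (∀ a ∈ A ⊓ N, ∀ n ∈ N, a⁻¹ * n⁻¹ * a * n ∈ Z) := by
  set X := ⁅A, (⊤ : Subgroup K)⁆
  set N := centralizer (X : Set K)
  have hXN : X ⊓ N ≤ N ⊓ centralizer (N : Set K) := by
    rw [inf_comm]
    exact inf_le_inf_left N X.le_centralizer_centralizer
  refine ⟨X, N, _, rfl, rfl, rfl, index_centralizer_ne_zero_of_finite hXfin hXcen, hXN, ?_⟩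
  rintro a ⟨haA, haN⟩ n hn
  refine hXN ⟨inv_mul_inv_mul_mul_mem_commutator_top haA n, ?_⟩
  exact N.mul_mem (N.mul_mem (N.mul_mem (N.inv_mem haN) (N.inv_mem hn)) haN) hn

theorem centralizer_of_finite_commutator {K : Type*} [Group K]
    (A : Subgroup K) (hA : A.Normal)
    (hXfin : ((⁅A, (⊤ : Subgroup K)⁆ : Subgroup K) : Set K).Finite)
    (hXcen : ∀ x ∈ (⁅A, (⊤ : Subgroup K)⁆ : Subgroup K),
      (Subgroup.centralizer ({x} : Set K)).index ≠ 0) :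
    ∃ (X N Z : Subgroup K),
      X = ⁅A, (⊤ : Subgroup K)⁆ ∧
      N = Subgroup.centralizer (X : Set K) ∧
      -- Z = Z(N), the center of N viewed as a subgroup of K
      Z = N ⊓ Subgroup.centralizer (N : Set K) ∧
      -- N has finite index in K
      N.index ≠ 0 ∧
      -- X ∩ N ⊆ Z(N)
      X ⊓ N ≤ Z ∧
      -- A ∩ N ⊆ Z₂(N): every commutator [a, n] with a ∈ A ∩ N, n ∈ N lies in Z(N)
      (∀ a ∈ A ⊓ N, ∀ n ∈ N, a⁻¹ * n⁻¹ * a * n ∈ Z) :=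
  centralizer_of_finite_commutator_general A hXfin hXcen
end
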